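/- arXiv:1405.1797 — 2 statements merged into one kernel-verified Lean document; each statement's English description precedes it below -/
import Mathlib

section
/- Type-class probability bound (equation (type4), derived in Appendix B): Let X be a nonempty finite type, let q : X → ℝ be a probability distribution with q a > 0 for all a, let n ≥ 1 be a natural number, and let x : Fin n → X be a sequence. Let t : X → ℝ be its empirical distribution, t a := (card {i | x i = a}) / n, let T := {y : Fin n → X | ∀ a, card {i | y i = a} = card {i | x i = a}} be the type class of x, and let D(t‖q) := Σ_{a : t a > 0} t a * logb 2 (t a / q a). Then (n+1)^{card X} · 2^{n · D(t‖q)} · ∏ i, q (x i) ≥ 1 / (card T). -/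
open Finset

lemma fact_le_pow_mul_fact (c k : ℕ) : (c + k).factorial ≤ (c + k) ^ k * c.factorial := by
  induction k with
  | zero => simp
  | succ k ih =>
    have h1 : (c + (k+1)).factorial = (c + k + 1) * (c + k).factorial := by
      rw [← Nat.add_assoc, Nat.factorial_succ]
    rw [h1]
    calc (c + k + 1) * (c + k).factorial ≤ (c + k + 1) * ((c + k) ^ k * c.factorial) :=
          Nat.mul_le_mul_left _ ih
      _ ≤ (c + k + 1) * ((c + k + 1) ^ k * c.factorial) := by
          have : (c + k) ^ k ≤ (c + k + 1) ^ k := Nat.pow_le_pow_left (Nat.le_succ _) _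
          exact Nat.mul_le_mul_left _ (Nat.mul_le_mul_right _ this)
      _ = (c + (k+1)) ^ (k+1) * c.factorial := by
          rw [← Nat.mul_assoc, ← pow_succ']
          ring_nf

lemma nat_fact_key (N c : ℕ) : N ^ c * N.factorial ≤ N ^ N * c.factorial := by
  rcases le_or_gt c N with h | h
  · have h2 := fact_le_pow_mul_fact c (N - c)
    rw [Nat.add_sub_cancel' h] at h2
    calc N ^ c * N.factorial ≤ N ^ c * (N ^ (N - c) * c.factorial) :=
          Nat.mul_le_mul_left _ h2
      _ = N ^ N * c.factorial := by
          rw [← Nat.mul_assoc, ← pow_add, Nat.add_sub_cancel' h]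
  · calc N ^ c * N.factorial = N ^ N * (N.factorial * N ^ (c - N)) := by
          rw [show N ^ c = N ^ N * N ^ (c - N) by
            rw [← pow_add, Nat.add_sub_cancel' h.le]]
          ring
      _ ≤ N ^ N * c.factorial := by
          gcongr
          exact Nat.factorial_mul_pow_sub_le_factorial h.le

lemma card_filter_eq_card_subtype' {n : ℕ} {X : Type*} [Fintype X] [DecidableEq X]
    (y : Fin n → X) (a : X) :
    (univ.filter (fun i => y i = a)).card = Fintype.card {i // y i = a} := by
  rw [Fintype.card_subtype]

lemma count_comp_perm {n : ℕ} {X : Type*} [Fintype X] [DecidableEq X]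
    (y : Fin n → X) (σ : Equiv.Perm (Fin n)) (a : X) :
    (univ.filter (fun i => y (σ i) = a)).card = (univ.filter (fun i => y i = a)).card := by
  rw [card_filter_eq_card_subtype', card_filter_eq_card_subtype']
  exact Fintype.card_congr (σ.subtypeEquiv (fun i => Iff.rfl))

lemma card_stab {n : ℕ} {X : Type*} [Fintype X] [DecidableEq X] (y₀ : Fin n → X) :
    (univ.filter (fun σ : Equiv.Perm (Fin n) => y₀ ∘ σ = y₀)).card
      = ∏ a, ((univ.filter (fun i => y₀ i = a)).card).factorial := by
  rw [show (univ.filter (fun σ : Equiv.Perm (Fin n) => y₀ ∘ σ = y₀)).card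
      = Fintype.card {σ : Equiv.Perm (Fin n) // y₀ ∘ σ = y₀} from (Fintype.card_subtype _).symm]
  rw [DomMulAct.stabilizer_card y₀]
  exact Finset.prod_congr rfl fun a _ => by rw [card_filter_eq_card_subtype']

lemma exists_perm_comp' {n : ℕ} {X : Type*} [Fintype X] [DecidableEq X]
    (y z : Fin n → X)
    (h : ∀ a, (univ.filter (fun i => y i = a)).card = (univ.filter (fun i => z i = a)).card) :
    ∃ σ : Equiv.Perm (Fin n), y ∘ σ = z := by
  have e : ∀ a : X, {i // z i = a} ≃ {i // y i = a} := fun a =>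
    Fintype.equivOfCardEq (by
      rw [← card_filter_eq_card_subtype', ← card_filter_eq_card_subtype', h a])
  refine ⟨(Equiv.sigmaFiberEquiv z).symm.trans
    ((Equiv.sigmaCongrRight e).trans (Equiv.sigmaFiberEquiv y)), funext fun i => ?_⟩
  simp only [Function.comp_apply, Equiv.trans_apply]
  have h1 : (Equiv.sigmaFiberEquiv z).symm i = ⟨z i, i, rfl⟩ := rfl
  rw [h1]
  exact (e (z i) ⟨i, rfl⟩).2

lemma fiber_card {n : ℕ} {X : Type*} [Fintype X] [DecidableEq X] (c : X → ℕ)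
    (y₀ : Fin n → X) (h₀ : ∀ a, (univ.filter (fun i => y₀ i = a)).card = c a) :
    (univ.filter (fun y : Fin n → X =>
        ∀ a, (univ.filter (fun i => y i = a)).card = c a)).card
      * ∏ a, (c a).factorial = n.factorial := by
  classical
  set F := univ.filter (fun y : Fin n → X =>
      ∀ a, (univ.filter (fun i => y i = a)).card = c a) with hF
  have hmaps : ∀ σ : Equiv.Perm (Fin n), σ ∈ (univ : Finset (Equiv.Perm (Fin n))) →
      y₀ ∘ σ ∈ F := by
    intro σ _
    simp only [hF, mem_filter, mem_univ, true_and]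
    intro a
    rw [show (univ.filter (fun i => (y₀ ∘ σ) i = a)) = (univ.filter (fun i => y₀ (σ i) = a))
      from rfl, count_comp_perm, h₀]
  have hcard := Finset.card_eq_sum_card_fiberwise hmaps
  have hfiber : ∀ y ∈ F, (univ.filter (fun σ : Equiv.Perm (Fin n) => y₀ ∘ σ = y)).card
      = ∏ a, (c a).factorial := by
    intro y hy
    simp only [hF, mem_filter, mem_univ, true_and] at hy
    obtain ⟨σ₀, hσ₀⟩ := exists_perm_comp' y₀ y (fun a => by rw [h₀ a, hy a])
    have key : (univ.filter (fun σ : Equiv.Perm (Fin n) => y₀ ∘ σ = y)).card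
        = (univ.filter (fun τ : Equiv.Perm (Fin n) => y₀ ∘ τ = y₀)).card := by
      apply Finset.card_nbij' (fun σ => σ * σ₀⁻¹) (fun τ => τ * σ₀)
      · intro σ hσ
        simp only [mem_coe, mem_filter, mem_univ, true_and] at hσ ⊢
        funext j
        have : y₀ (σ (σ₀⁻¹ j)) = y (σ₀⁻¹ j) := congrFun hσ _
        simp only [Function.comp_apply, Equiv.Perm.coe_mul]
        rw [this, ← hσ₀]
        simp
      · intro τ hτ
        simp only [mem_coe, mem_filter, mem_univ, true_and] at hτ ⊢
        funext j
        have : y₀ (τ (σ₀ j)) = y₀ (σ₀ j) := congrFun hτ _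
        simp only [Function.comp_apply, Equiv.Perm.coe_mul]
        rw [this]
        exact congrFun hσ₀ j
      · intro σ _; simp [mul_assoc]
      · intro τ _; simp [mul_assoc]
    rw [key, card_stab]
    exact Finset.prod_congr rfl fun a _ => by rw [h₀ a]
  rw [Finset.sum_congr rfl hfiber, Finset.sum_const, smul_eq_mul] at hcard
  rw [← hcard]
  simp [Fintype.card_perm]

-- grouping a product over Fin n by values
lemma prod_comp_count {n : ℕ} {X : Type*} [Fintype X] [DecidableEq X]
    (y : Fin n → X) (f : X → ℝ) :
    ∏ i, f (y i) = ∏ a, f a ^ (univ.filter (fun i => y i = a)).card := by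
  rw [← Finset.prod_fiberwise' univ y f]
  exact Finset.prod_congr rfl fun a _ => by rw [Finset.prod_const]

-- sum of counts
lemma sum_count {n : ℕ} {X : Type*} [Fintype X] [DecidableEq X] (y : Fin n → X) :
    ∑ a, (univ.filter (fun i => y i = a)).card = n := by
  rw [← Finset.card_eq_sum_card_fiberwise (fun i (_ : i ∈ univ) => mem_univ (y i))]
  simp

lemma count_prob_le {n : ℕ} {X : Type*} [Fintype X] [DecidableEq X]
    (x y₀ : Fin n → X) (hn : 1 ≤ n) (t : X → ℝ)
    (ht' : ∀ a, t a = ((univ.filter (fun i => x i = a)).card : ℝ) / n) :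
    ((univ.filter (fun y : Fin n → X => ∀ a,
        (univ.filter (fun i => y i = a)).card = (univ.filter (fun i => y₀ i = a)).card)).card : ℝ)
      * ∏ a, t a ^ (univ.filter (fun i => y₀ i = a)).card
    ≤ ((univ.filter (fun y : Fin n → X => ∀ a,
        (univ.filter (fun i => y i = a)).card = (univ.filter (fun i => x i = a)).card)).card : ℝ)
      * ∏ a, t a ^ (univ.filter (fun i => x i = a)).card := by
  set N : X → ℕ := fun a => (univ.filter (fun i => x i = a)).card with hN
  set c : X → ℕ := fun a => (univ.filter (fun i => y₀ i = a)).card with hc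
  set M₁ : ℕ := (univ.filter (fun y : Fin n → X => ∀ a,
      (univ.filter (fun i => y i = a)).card = c a)).card with hM₁def
  set M₂ : ℕ := (univ.filter (fun y : Fin n → X => ∀ a,
      (univ.filter (fun i => y i = a)).card = N a)).card with hM₂def
  have npos : (0:ℝ) < n := by exact_mod_cast hn
  have hM₁ : M₁ * ∏ a, (c a).factorial = n.factorial := fiber_card c y₀ (fun a => rfl)
  have hM₂ : M₂ * ∏ a, (N a).factorial = n.factorial := fiber_card N x (fun a => rfl)
  have hcsum : ∑ a, c a = n := sum_count y₀
  have hNsum : ∑ a, N a = n := sum_count x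
  -- key natural-number inequality
  have key_nat : M₁ * ∏ a, (N a) ^ (c a) ≤ M₂ * ∏ a, (N a) ^ (N a) := by
    have hposK : 0 < (∏ a, (c a).factorial) * ∏ a, (N a).factorial := by
      apply Nat.mul_pos <;> exact Finset.prod_pos (fun a _ => Nat.factorial_pos _)
    apply Nat.le_of_mul_le_mul_right _ hposK
    calc M₁ * (∏ a, (N a) ^ (c a)) * ((∏ a, (c a).factorial) * ∏ a, (N a).factorial)
        = (M₁ * ∏ a, (c a).factorial) * ∏ a, ((N a) ^ (c a) * (N a).factorial) := by
          rw [Finset.prod_mul_distrib]; ring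
      _ = n.factorial * ∏ a, ((N a) ^ (c a) * (N a).factorial) := by rw [hM₁]
      _ ≤ n.factorial * ∏ a, ((N a) ^ (N a) * (c a).factorial) :=
          Nat.mul_le_mul_left _ (Finset.prod_le_prod' fun a _ => nat_fact_key (N a) (c a))
      _ = (M₂ * ∏ a, (N a).factorial) * ∏ a, ((N a) ^ (N a) * (c a).factorial) := by rw [hM₂]
      _ = M₂ * (∏ a, (N a) ^ (N a)) * ((∏ a, (c a).factorial) * ∏ a, (N a).factorial) := by
          rw [Finset.prod_mul_distrib]; ring
  -- move to the reals
  have hprod : ∀ (d : X → ℕ), (∑ a, d a = n) →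
      ∏ a, t a ^ d a = (∏ a, ((N a : ℝ)) ^ d a) / (n : ℝ) ^ n := by
    intro d hd
    calc ∏ a, t a ^ d a = ∏ a, ((N a : ℝ) ^ d a / (n:ℝ) ^ d a) := by
          refine Finset.prod_congr rfl fun a _ => ?_
          rw [ht' a, div_pow]
      _ = (∏ a, (N a : ℝ) ^ d a) / ∏ a, (n:ℝ) ^ d a := by rw [Finset.prod_div_distrib]
      _ = (∏ a, (N a : ℝ) ^ d a) / (n : ℝ) ^ n := by
          rw [Finset.prod_pow_eq_pow_sum univ d ((n:ℝ)), hd]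
  rw [hprod c hcsum, hprod N hNsum, ← mul_div_assoc, ← mul_div_assoc]
  have hkey : (M₁ : ℝ) * ∏ a, (N a : ℝ) ^ c a ≤ (M₂ : ℝ) * ∏ a, (N a : ℝ) ^ N a := by
    exact_mod_cast key_nat
  gcongr


theorem type_class_bound {X : Type*} [Fintype X] [DecidableEq X] [Nonempty X]
    (q : X → ℝ) (hq : ∀ a, 0 < q a) (hq1 : ∑ a, q a = 1)
    (n : ℕ) (hn : 1 ≤ n) (x : Fin n → X)
    -- the empirical distribution (type) of `x`
    (t : X → ℝ)
    (ht : t = fun a => (((Finset.univ.filter (fun i => x i = a)).card : ℝ) / n))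
    -- the Kullback–Leibler divergence `D(t‖q)`
    (Dtq : ℝ)
    (hD : Dtq = ∑ a, if 0 < t a then t a * Real.logb 2 (t a / q a) else 0)
    -- the cardinality of the type class of `x`
    (cardT : ℕ)
    (hT : cardT = (Finset.univ.filter (fun y : Fin n → X => ∀ a,
        (Finset.univ.filter (fun i => y i = a)).card
          = (Finset.univ.filter (fun i => x i = a)).card)).card) :
    ((n + 1 : ℝ) ^ (Fintype.card X)) * (2 : ℝ) ^ ((n : ℝ) * Dtq) * ∏ i, q (x i)
      ≥ 1 / (cardT : ℝ) := by
  set N : X → ℕ := fun a => (univ.filter (fun i => x i = a)).card with hN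
  have npos : (0 : ℝ) < n := by exact_mod_cast hn
  have ht' : ∀ a, t a = (N a : ℝ) / n := fun a => by rw [ht]
  have htnn : ∀ a, 0 ≤ t a := fun a => by rw [ht' a]; positivity
  have htpos_iff : ∀ a, (0 < t a ↔ 0 < N a) := by
    intro a
    rw [ht' a]
    constructor
    · intro h
      by_contra hc
      push_neg at hc
      interval_cases h' : N a <;> simp_all
    · intro h
      positivity
  have hNsum : ∑ a, N a = n := sum_count x
  -- Piece 1 : 2^(n·D) * ∏ q(xᵢ) = ∏ₐ tₐ^Nₐ
  have hq_prod : ∏ i, q (x i) = ∏ a, q a ^ N a := prod_comp_count x q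
  have h2D : (2 : ℝ) ^ ((n : ℝ) * Dtq) = ∏ a, (t a / q a) ^ N a := by
    have hsum : (n : ℝ) * Dtq
        = ∑ a, (if 0 < t a then (N a : ℝ) * Real.logb 2 (t a / q a) else 0) := by
      rw [hD, Finset.mul_sum]
      refine Finset.sum_congr rfl fun a _ => ?_
      rw [mul_ite, mul_zero, ← mul_assoc]
      congr 2
      rw [ht' a]
      field_simp
    rw [hsum, Real.rpow_sum_of_pos (by norm_num : (0:ℝ) < 2)]
    refine Finset.prod_congr rfl fun a _ => ?_
    by_cases hta : 0 < t a
    · rw [if_pos hta, mul_comm, Real.rpow_mul (by norm_num : (0:ℝ) ≤ 2),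
        Real.rpow_logb (by norm_num) (by norm_num) (div_pos hta (hq a)),
        Real.rpow_natCast]
    · rw [if_neg hta]
      have hNa : N a = 0 := by
        by_contra h
        exact hta ((htpos_iff a).2 (Nat.pos_of_ne_zero h))
      rw [hNa, Real.rpow_zero, pow_zero]
  have P1 : (2 : ℝ) ^ ((n : ℝ) * Dtq) * ∏ i, q (x i) = ∏ a, (t a) ^ N a := by
    rw [h2D, hq_prod, ← Finset.prod_mul_distrib]
    refine Finset.prod_congr rfl fun a _ => ?_
    rw [div_pow, div_mul_cancel₀]
    exact pow_ne_zero _ (hq a).ne'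
  -- cardT positive and cardT * ∏ Nₐ! = n!
  have hxmem : x ∈ (Finset.univ.filter (fun y : Fin n → X => ∀ a,
      (Finset.univ.filter (fun i => y i = a)).card
        = (Finset.univ.filter (fun i => x i = a)).card)) := by
    simp
  have hTpos : 0 < cardT := by
    rw [hT]; exact Finset.card_pos.2 ⟨x, hxmem⟩
  have hTfact : cardT * ∏ a, (N a).factorial = n.factorial := by
    rw [hT]; exact fiber_card N x (fun a => rfl)
  -- Piece 2 : the key bound
  have star : (1 : ℝ)
      ≤ ((n + 1 : ℝ) ^ (Fintype.card X)) * cardT * ∏ a, (t a) ^ N a := by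
    have hsumt : ∑ a, t a = 1 := by
      rw [show ∑ a, t a = ∑ a, ((N a : ℝ) / n) from Finset.sum_congr rfl fun a _ => ht' a,
        ← Finset.sum_div]
      rw [show ∑ a, ((N a : ℕ) : ℝ) = ((∑ a, N a : ℕ) : ℝ) by push_cast; rfl, hNsum]
      exact div_self npos.ne'
    set u : (Fin n → X) → (X → Fin (n+1)) := fun y a =>
      ⟨(univ.filter (fun i => y i = a)).card,
        Nat.lt_succ_of_le (le_trans (Finset.card_filter_le _ _) (by simp))⟩ with hu
    have step1 : (1:ℝ) = ∑ y : Fin n → X, ∏ i, t (y i) := by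
      calc (1:ℝ) = (∑ a, t a) ^ n := by rw [hsumt, one_pow]
        _ = ∏ _i : Fin n, (∑ a, t a) := by rw [Finset.prod_const, card_univ, Fintype.card_fin]
        _ = ∑ y ∈ Fintype.piFinset (fun _ : Fin n => (univ : Finset X)), ∏ i, t (y i) :=
            Finset.prod_univ_sum _ _
        _ = ∑ y : Fin n → X, ∏ i, t (y i) := by rw [Fintype.piFinset_univ]
    have step2 : ∑ y : Fin n → X, ∏ i, t (y i)
        = ∑ cc : X → Fin (n+1), ∑ y ∈ univ.filter (fun y => u y = cc), ∏ i, t (y i) :=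
      (Finset.sum_fiberwise univ u (fun y => ∏ i, t (y i))).symm
    have step3 : ∀ cc : X → Fin (n+1),
        ∑ y ∈ univ.filter (fun y => u y = cc), ∏ i, t (y i)
          ≤ (cardT : ℝ) * ∏ a, (t a) ^ N a := by
      intro cc
      rcases (univ.filter (fun y => u y = cc)).eq_empty_or_nonempty with he | ⟨y₀, hy₀⟩
      · rw [he, Finset.sum_empty]
        have : (0:ℝ) ≤ (cardT : ℝ) * ∏ a, (t a) ^ N a := by
          apply mul_nonneg (by positivity)
          exact Finset.prod_nonneg fun a _ => pow_nonneg (htnn a) _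
        exact this
      · have hy₀c : u y₀ = cc := (Finset.mem_filter.1 hy₀).2
        have hcount : ∀ y ∈ univ.filter (fun y => u y = cc), ∀ a,
            (univ.filter (fun i => y i = a)).card = (univ.filter (fun i => y₀ i = a)).card := by
          intro y hy a
          have h1 : u y = cc := (Finset.mem_filter.1 hy).2
          have := congrArg Fin.val (congrFun (h1.trans hy₀c.symm) a)
          exact this
        have hval : ∀ y ∈ univ.filter (fun y => u y = cc),
            ∏ i, t (y i) = ∏ a, (t a) ^ (univ.filter (fun i => y₀ i = a)).card := by
          intro y hy
          rw [prod_comp_count y t]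
          exact Finset.prod_congr rfl fun a _ => by rw [hcount y hy a]
        rw [Finset.sum_congr rfl hval, Finset.sum_const, nsmul_eq_mul]
        have hsubset : univ.filter (fun y => u y = cc)
            ⊆ univ.filter (fun y : Fin n → X => ∀ a,
              (univ.filter (fun i => y i = a)).card = (univ.filter (fun i => y₀ i = a)).card) := by
          intro y hy
          simp only [Finset.mem_filter, Finset.mem_univ, true_and]
          exact hcount y hy
        calc ((univ.filter (fun y => u y = cc)).card : ℝ)
              * ∏ a, (t a) ^ (univ.filter (fun i => y₀ i = a)).card
            ≤ ((univ.filter (fun y : Fin n → X => ∀ a,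
                (univ.filter (fun i => y i = a)).card
                  = (univ.filter (fun i => y₀ i = a)).card)).card : ℝ)
              * ∏ a, (t a) ^ (univ.filter (fun i => y₀ i = a)).card := by
              apply mul_le_mul_of_nonneg_right
              · exact_mod_cast Finset.card_le_card hsubset
              · exact Finset.prod_nonneg fun a _ => pow_nonneg (htnn a) _
          _ ≤ (cardT : ℝ) * ∏ a, (t a) ^ N a := by
              rw [hT]
              exact count_prob_le x y₀ hn t ht'
    calc (1:ℝ) = ∑ cc : X → Fin (n+1), ∑ y ∈ univ.filter (fun y => u y = cc), ∏ i, t (y i) := by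
          rw [← step2, ← step1]
      _ ≤ (Fintype.card (X → Fin (n+1))) • ((cardT : ℝ) * ∏ a, (t a) ^ N a) := by
          rw [← Finset.card_univ]
          exact Finset.sum_le_card_nsmul univ _ _ (fun cc _ => step3 cc)
      _ = ((n + 1 : ℝ) ^ (Fintype.card X)) * cardT * ∏ a, (t a) ^ N a := by
          rw [Fintype.card_fun, Fintype.card_fin, nsmul_eq_mul]
          push_cast
          ring
  -- Finish
  rw [ge_iff_le, div_le_iff₀ (by exact_mod_cast hTpos)]
  calc (1:ℝ) ≤ ((n + 1 : ℝ) ^ (Fintype.card X)) * cardT * ∏ a, (t a) ^ N a := star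
    _ = ((n + 1 : ℝ) ^ (Fintype.card X)) * cardT
          * ((2 : ℝ) ^ ((n : ℝ) * Dtq) * ∏ i, q (x i)) := by rw [P1]
    _ = ((n + 1 : ℝ) ^ (Fintype.card X)) * (2 : ℝ) ^ ((n : ℝ) * Dtq) * (∏ i, q (x i))
          * cardT := by ring
end

section
/- Success probability of the pretty good measurement as a collision relative entropy (equation (succ), due to Beigi–Gohari and used in the proof of Proposition 1): Let M ≥ 1 be a natural number and let ρ_m be a density matrix on ι for each m ∈ Fin M. Set S := Σ_m ρ_m, and define the pretty good measurement Λ_m := S^(−1/2) * ρ_m * S^(−1/2) (Moore–Penrose powers). Define σ_MB := (1/M) • Σ_m (Matrix.stdBasisMatrix m m 1 ⊗ₖ ρ_m) on Fin M × ι, σ_M := (1/M : ℂ) • (1 : Matrix (Fin M) (Fin M) ℂ), and σ_B := (1/M) • S. Then the average success probability satisfies (1/M) · Σ_m Re(Tr(Λ_m * ρ_m)) = (1/M) · 2^{D₂(σ_MB ‖ σ_M ⊗ₖ σ_B)}. -/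
open Matrix
open scoped ComplexOrder Kronecker

variable {ι : Type*} [Fintype ι] [DecidableEq ι]

/-- The `j`-th eigenvector (column of the eigenvector unitary) of a matrix,
via its spectral decomposition; junk value if the matrix is not Hermitian. -/
noncomputable def eigVec (ρ : Matrix ι ι ℂ) (j : ι) : ι → ℂ :=
  if hρ : ρ.IsHermitian then fun k => (hρ.eigenvectorUnitary : Matrix ι ι ℂ) k j
  else 0

/-- The Moore–Penrose power `A^(r)` of a positive semidefinite matrix
`A = ∑ⱼ μⱼ vⱼvⱼ†`, namely `∑_{j : μⱼ > 0} μⱼ^r vⱼvⱼ†`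
(junk value if `A` is not Hermitian). -/
noncomputable def mpPow (A : Matrix ι ι ℂ) (r : ℝ) : Matrix ι ι ℂ :=
  if hA : A.IsHermitian then
    ∑ j, if 0 < hA.eigenvalues j then
      (hA.eigenvalues j ^ r) • Matrix.vecMulVec (eigVec A j) (star (eigVec A j))
    else 0
  else 0

/-- The collision relative entropy `D₂(ρ‖τ)`. -/
noncomputable def collisionRelEntropy (ρ τ : Matrix ι ι ℂ) : ℝ :=
  Real.logb 2 (((mpPow τ (-(1/4)) * ρ * mpPow τ (-(1/4))) ^ 2).trace.re)

/-!
Every Moore–Penrose power is a value of the continuous functional calculus, at the function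
`x ↦ x ^ r · [x > 0]`. Hence these powers multiply and scale like real powers and commute with the
star algebra homomorphism `A ↦ 1 ⊗ₖ A`, which gives `(σ_M ⊗ σ_B)^(-1/4) = √M (1 ⊗ S^(-1/4))`.
Sandwiching `σ_MB` between two copies of it yields the block-diagonal matrix with blocks
`S^(-1/4) ρ_m S^(-1/4)`, and by cyclicity the trace of its square is `∑_m Tr(Λ_m ρ_m)`. That trace
is positive, as otherwise `S^(-1/4) S S^(-1/4) = S^(1/2)` would vanish, so `2 ^ D₂` returns it.
-/

noncomputable def mpRpow (r x : ℝ) : ℝ := if 0 < x then x ^ r else 0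

lemma inv_sq_rpow_neg_quarter {x : ℝ} (hx : 0 ≤ x) : ((x ^ 2)⁻¹) ^ (-(1 / 4) : ℝ) = √x := by
  rw [Real.inv_rpow (by positivity), ← Real.rpow_neg (by positivity), Real.sqrt_eq_rpow,
    ← Real.rpow_natCast, ← Real.rpow_mul hx]
  norm_num

lemma Matrix.continuousOn_real_spectrum {n 𝕜 : Type*} [Fintype n] [DecidableEq n] [RCLike 𝕜]
    (A : Matrix n n 𝕜) (f : ℝ → ℝ) : ContinuousOn f (spectrum ℝ A) :=
  A.finite_real_spectrum.continuousOn f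

lemma Matrix.IsHermitian.kronecker {m n R : Type*} [CommSemiring R] [StarRing R]
    {A : Matrix m m R} {B : Matrix n n R} (hA : A.IsHermitian) (hB : B.IsHermitian) :
    (A ⊗ₖ B).IsHermitian := by
  rw [IsHermitian, conjTranspose_kronecker, hA.eq, hB.eq]

def oneKroneckerStarAlgHom (n : Type*) [Fintype n] [DecidableEq n] {m R : Type*} [Fintype m]
    [DecidableEq m] [CommSemiring R] [StarRing R] :
    Matrix m m R →⋆ₐ[R] Matrix (n × m) (n × m) R where
  toFun A := 1 ⊗ₖ A
  map_one' := one_kronecker_one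
  map_mul' A B := by rw [← mul_kronecker_mul, Matrix.one_mul]
  map_zero' := kronecker_zero _
  map_add' := kronecker_add _
  commutes' r := by simp [Algebra.algebraMap_eq_smul_one, kronecker_smul]
  map_star' A := by simp [star_eq_conjTranspose, conjTranspose_kronecker]

lemma continuous_oneKroneckerStarAlgHom (n : Type*) [Fintype n] [DecidableEq n] {m : Type*}
    [Fintype m] [DecidableEq m] : Continuous (oneKroneckerStarAlgHom n (m := m) (R := ℂ)) :=
  continuous_pi fun _ => continuous_pi fun _ => continuous_const.mul <|
    (continuous_apply _).comp (continuous_apply _)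

lemma trace_sandwich_mul_self {n R : Type*} [Fintype n] [CommSemiring R] (A B : Matrix n n R) :
    (A * B * A * (A * B * A)).trace = (A * A * B * (A * A) * B).trace := by
  simp only [Matrix.mul_assoc]
  rw [trace_mul_comm]
  simp only [Matrix.mul_assoc]
  rw [trace_mul_comm]
  simp only [Matrix.mul_assoc]

lemma Matrix.IsHermitian.re_trace_mul_self_nonneg {n : Type*} [Fintype n] {X : Matrix n n ℂ}
    (hX : X.IsHermitian) : 0 ≤ (X * X).trace.re := by
  have hpsd : (Xᴴ * X).PosSemidef := posSemidef_conjTranspose_mul_self X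
  rw [hX.eq] at hpsd
  exact (Complex.nonneg_iff.mp hpsd.trace_nonneg).1

lemma Matrix.IsHermitian.re_trace_mul_self_pos {n : Type*} [Fintype n] {X : Matrix n n ℂ}
    (hX : X.IsHermitian) (h : X ≠ 0) : 0 < (X * X).trace.re := by
  have hpsd : (Xᴴ * X).PosSemidef := posSemidef_conjTranspose_mul_self X
  have hne : (Xᴴ * X).trace ≠ 0 := trace_conjTranspose_mul_self_eq_zero_iff.not.mpr h
  rw [hX.eq] at hpsd hne
  exact (Complex.pos_iff.mp (lt_of_le_of_ne hpsd.trace_nonneg hne.symm)).1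

section blockDiagonal

variable {m n R : Type*} [Fintype m] [DecidableEq m] [Fintype n] [CommSemiring R]

lemma sum_single_kronecker_mul_sum_single_kronecker (X Y : m → Matrix n n R) :
    (∑ i, single i i (1 : R) ⊗ₖ X i) * (∑ i, single i i (1 : R) ⊗ₖ Y i)
      = ∑ i, single i i (1 : R) ⊗ₖ (X i * Y i) := by
  rw [Finset.sum_mul_sum]
  refine Finset.sum_congr rfl fun i _ => ?_
  rw [Finset.sum_eq_single i]
  · rw [← mul_kronecker_mul, single_mul_single_same, mul_one]
  · intro j _ hji
    rw [← mul_kronecker_mul, single_mul_single_of_ne (h := hji.symm), zero_kronecker]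
  · simp

lemma trace_sum_single_kronecker (X : m → Matrix n n R) :
    (∑ i, single i i (1 : R) ⊗ₖ X i).trace = ∑ i, (X i).trace := by
  simp [trace_sum, trace_kronecker]

end blockDiagonal

section mpPow

variable {A : Matrix ι ι ℂ}

lemma mpPow_eq_cfc (hA : A.IsHermitian) (r : ℝ) : mpPow A r = cfc (mpRpow r) A := by
  rw [hA.cfc_eq, IsHermitian.cfc, Unitary.conjStarAlgAut_apply, mpPow, dif_pos hA]
  ext i k
  simp only [Matrix.sum_apply, mul_apply, diagonal_apply, eigVec, dif_pos hA]
  refine Finset.sum_congr rfl fun j _ => ?_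
  split_ifs <;> simp [vecMulVec_apply, Complex.real_smul, mpRpow, *]; ring

lemma isHermitian_mpPow (hA : A.IsHermitian) (r : ℝ) : (mpPow A r).IsHermitian := by
  rw [mpPow_eq_cfc hA]
  exact cfc_predicate _ A

lemma mpPow_mul_mpPow (hA : A.IsHermitian) (a b : ℝ) :
    mpPow A a * mpPow A b = mpPow A (a + b) := by
  simp only [mpPow_eq_cfc hA]
  rw [← cfc_mul _ _ A (A.continuousOn_real_spectrum _) (A.continuousOn_real_spectrum _)]
  congr 1
  ext x
  by_cases hx : 0 < x
  · simp [mpRpow, hx, Real.rpow_add hx]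
  · simp [mpRpow, hx]

lemma mpPow_one (hA : A.PosSemidef) : mpPow A 1 = A := by
  rw [mpPow_eq_cfc hA.1]
  conv_rhs => rw [← cfc_id ℝ A hA.1]
  refine cfc_congr fun x hx => ?_
  obtain ⟨i, rfl⟩ := hA.1.spectrum_real_eq_range_eigenvalues ▸ hx
  rcases (hA.eigenvalues_nonneg i).lt_or_eq with h | h
  · simp [mpRpow, h]
  · simp [mpRpow, ← h]

lemma mpPow_ne_zero (hA : A.PosSemidef) (hA0 : A ≠ 0) (r : ℝ) : mpPow A r ≠ 0 := fun h => hA0 <| by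
  rw [← mpPow_one hA, ← add_sub_cancel r 1, ← mpPow_mul_mpPow hA.1, h, Matrix.zero_mul]

lemma mpPow_mul_mul_mpPow (hA : A.PosSemidef) (r : ℝ) :
    mpPow A r * A * mpPow A r = mpPow A (2 * r + 1) := by
  calc mpPow A r * A * mpPow A r = mpPow A r * mpPow A 1 * mpPow A r := by rw [mpPow_one hA]
    _ = mpPow A (2 * r + 1) := by
      rw [mpPow_mul_mpPow hA.1, mpPow_mul_mpPow hA.1]
      congr 1
      ring

lemma mpPow_smul (hA : A.IsHermitian) {c : ℝ} (hc : 0 < c) (r : ℝ) :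
    mpPow (c • A) r = c ^ r • mpPow A r := by
  rw [mpPow_eq_cfc hA, mpPow_eq_cfc (hA.smul (IsSelfAdjoint.all c)),
    ← cfc_comp_smul c _ A (A.finite_real_spectrum.image _ |>.continuousOn _),
    ← cfc_smul _ _ A (A.continuousOn_real_spectrum _)]
  congr 1
  ext x
  by_cases hx : 0 < x
  · simp [mpRpow, hx, hc, Real.mul_rpow hc.le hx.le]
  · simp [mpRpow, hx, mul_pos_iff_of_pos_left hc]

lemma mpPow_one_kronecker (n : Type*) [Fintype n] [DecidableEq n] (hA : A.IsHermitian) (r : ℝ) :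
    mpPow ((1 : Matrix n n ℂ) ⊗ₖ A) r = 1 ⊗ₖ mpPow A r := by
  have h1A : ((1 : Matrix n n ℂ) ⊗ₖ A).IsHermitian := isHermitian_one.kronecker hA
  rw [mpPow_eq_cfc hA, mpPow_eq_cfc h1A]
  exact ((oneKroneckerStarAlgHom n).map_cfc (mpRpow r) A (A.continuousOn_real_spectrum _)
    (continuous_oneKroneckerStarAlgHom n) hA h1A).symm

lemma mpPow_uniform_kronecker_neg_quarter (n : Type*) [Fintype n] [DecidableEq n] {M : ℕ}
    (hM : 0 < M) (hA : A.IsHermitian) :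
    mpPow ((((1 : ℂ) / M) • (1 : Matrix n n ℂ)) ⊗ₖ (((1 : ℝ) / M) • A)) (-(1 / 4))
      = √M • ((1 : Matrix n n ℂ) ⊗ₖ mpPow A (-(1 / 4))) := by
  have hscale : (((1 : ℂ) / M) • (1 : Matrix n n ℂ)) ⊗ₖ (((1 : ℝ) / M) • A)
      = ((M : ℝ) ^ 2)⁻¹ • ((1 : Matrix n n ℂ) ⊗ₖ A) := by
    rw [smul_kronecker, kronecker_smul]
    ext i j
    simp [Complex.real_smul]
    ring
  rw [hscale, mpPow_smul (isHermitian_one.kronecker hA) (by positivity), mpPow_one_kronecker _ hA,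
    inv_sq_rpow_neg_quarter (Nat.cast_nonneg M)]

lemma isHermitian_mpPow_mul_mul_mpPow (hA : A.IsHermitian) {B : Matrix ι ι ℂ}
    (hB : B.IsHermitian) (r : ℝ) : (mpPow A r * B * mpPow A r).IsHermitian := by
  have h := isHermitian_conjTranspose_mul_mul (mpPow A r) hB
  rwa [(isHermitian_mpPow hA r).eq] at h

lemma exists_mpPow_mul_mul_mpPow_ne_zero {κ : Type*} [Fintype κ] {ρ : κ → Matrix ι ι ℂ}
    (hA_eq : A = ∑ k, ρ k) (hA : A.PosSemidef) (hA0 : A ≠ 0) (r : ℝ) :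
    ∃ k, mpPow A r * ρ k * mpPow A r ≠ 0 := by
  by_contra! h
  apply mpPow_ne_zero hA hA0 (2 * r + 1)
  rw [← mpPow_mul_mul_mpPow hA r]
  nth_rewrite 2 [hA_eq]
  rw [Matrix.mul_sum, Finset.sum_mul]
  exact Finset.sum_eq_zero fun k _ => h k

end mpPow

theorem pgm_success_eq_collision (M : ℕ) (hM : 1 ≤ M)
    (ρ : Fin M → Matrix ι ι ℂ)
    (hρ : ∀ m, (ρ m).PosSemidef) (hρtr : ∀ m, (ρ m).trace = 1)
    (S : Matrix ι ι ℂ) (hS : S = ∑ m, ρ m)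
    -- the pretty good measurement
    (Λ : Fin M → Matrix ι ι ℂ)
    (hΛ : Λ = fun m => mpPow S (-(1/2)) * ρ m * mpPow S (-(1/2)))
    (σMB : Matrix (Fin M × ι) (Fin M × ι) ℂ)
    (hσMB : σMB = ((1 : ℝ) / M) • ∑ m, Matrix.single m m (1 : ℂ) ⊗ₖ ρ m)
    (σM : Matrix (Fin M) (Fin M) ℂ) (hσM : σM = ((1 : ℂ) / M) • 1)
    (σB : Matrix ι ι ℂ) (hσB : σB = ((1 : ℝ) / M) • S) :
    (1 / M : ℝ) * ∑ m, ((Λ m * ρ m).trace.re)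
      = (1 / M : ℝ) * (2 : ℝ) ^ collisionRelEntropy σMB (σM ⊗ₖ σB) := by
  have hM0 : (0 : ℝ) < M := by exact_mod_cast hM
  have hS_psd : S.PosSemidef := hS ▸ posSemidef_sum _ fun m _ => hρ m
  have hS0 : S ≠ 0 := fun h => by
    have htr : S.trace = M := by simp [hS, trace_sum, hρtr]
    rw [h, trace_zero] at htr
    exact Nat.cast_ne_zero.mpr (by omega) htr.symm
  set T := mpPow S (-(1 / 4))
  have hsandwich : mpPow (σM ⊗ₖ σB) (-(1 / 4)) * σMB * mpPow (σM ⊗ₖ σB) (-(1 / 4))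
      = ∑ m, single m m 1 ⊗ₖ (T * ρ m * T) := by
    rw [hσM, hσB, mpPow_uniform_kronecker_neg_quarter _ hM hS_psd.1, hσMB]
    simp only [smul_mul_assoc, mul_smul_comm, smul_smul, Matrix.mul_sum, Matrix.sum_mul,
      ← mul_kronecker_mul, Matrix.one_mul, Matrix.mul_one]
    rw [mul_left_comm, Real.mul_self_sqrt hM0.le, one_div_mul_cancel hM0.ne', one_smul]
  have hΛρ : ∀ m, (Λ m * ρ m).trace = (T * ρ m * T * (T * ρ m * T)).trace := fun m => by
    rw [trace_sandwich_mul_self, hΛ, mpPow_mul_mpPow hS_psd.1]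
    norm_num
  have hTρT : ∀ m, (T * ρ m * T).IsHermitian := fun m =>
    isHermitian_mpPow_mul_mul_mpPow hS_psd.1 (hρ m).1 _
  have hpos : 0 < ∑ m, (T * ρ m * T * (T * ρ m * T)).trace.re := by
    obtain ⟨m, hm⟩ := exists_mpPow_mul_mul_mpPow_ne_zero hS hS_psd hS0 (-(1 / 4))
    exact Finset.sum_pos' (fun m _ => (hTρT m).re_trace_mul_self_nonneg)
      ⟨m, Finset.mem_univ m, (hTρT m).re_trace_mul_self_pos hm⟩
  rw [collisionRelEntropy, hsandwich, sq, sum_single_kronecker_mul_sum_single_kronecker,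
    trace_sum_single_kronecker, Complex.re_sum, Real.rpow_logb (by norm_num) (by norm_num) hpos]
  simp only [hΛρ]
end
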